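/- arXiv:2010.02766 — 2 statements merged into one kernel-verified Lean document; each statement's English description precedes it below -/
import Mathlib

section
/- Let (T,d) be an ℝ-tree with a base point ∗. Then the Gromov product kernel K(x,y) := (d(x,∗) + d(y,∗) − d(x,y))/2 is positive semidefinite: for all finite collections of points x₁,…,xₙ ∈ T and real numbers c₁,…,cₙ, one has ∑_{i,j} cᵢ cⱼ K(xᵢ,xⱼ) ≥ 0. -/
open Set

/-- An ℝ-tree structure on a metric space `T`, given by a geodesic parametrization
`geo a b : ℝ → T` of the segment `⟦a,b⟧`. -/
structure IsRTree {T : Type*} [MetricSpace T] (geo : T → T → ℝ → T) : Prop where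
  source : ∀ a b, geo a b 0 = a
  target : ∀ a b, geo a b (dist a b) = b
  isom : ∀ a b, ∀ s ∈ Set.Icc (0 : ℝ) (dist a b), ∀ u ∈ Set.Icc (0 : ℝ) (dist a b),
    dist (geo a b s) (geo a b u) = |s - u|
  unique_arc : ∀ a b (q : ℝ → T), ContinuousOn q (Set.Icc 0 1) →
    Set.InjOn q (Set.Icc 0 1) → q 0 = a → q 1 = b →
    q '' Set.Icc 0 1 = geo a b '' Set.Icc 0 (dist a b)

namespace RTreeAux

variable {T : Type*} [MetricSpace T] {geo : T → T → ℝ → T}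

lemma zero_mem_Icc (a b : T) : (0:ℝ) ∈ Icc (0:ℝ) (dist a b) :=
  ⟨le_refl 0, dist_nonneg⟩

lemma dist_mem_Icc (a b : T) : dist a b ∈ Icc (0:ℝ) (dist a b) :=
  ⟨dist_nonneg, le_refl _⟩

lemma geo_dist_left (h : IsRTree geo) (a b : T) {s : ℝ}
    (hs : s ∈ Icc (0:ℝ) (dist a b)) : dist a (geo a b s) = s := by
  have := h.isom a b 0 (zero_mem_Icc a b) s hs
  rw [h.source a b] at this
  rw [this, abs_of_nonpos (by linarith [hs.1])]
  ring

lemma geo_dist_right (h : IsRTree geo) (a b : T) {s : ℝ}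
    (hs : s ∈ Icc (0:ℝ) (dist a b)) : dist (geo a b s) b = dist a b - s := by
  have := h.isom a b s hs (dist a b) (dist_mem_Icc a b)
  rw [h.target a b] at this
  rw [this, abs_of_nonpos (by linarith [hs.2])]
  ring

lemma geo_continuousOn (h : IsRTree geo) (a b : T) :
    ContinuousOn (geo a b) (Icc (0:ℝ) (dist a b)) := by
  apply LipschitzOnWith.continuousOn (K := 1)
  intro s hs u hu
  rw [edist_dist, edist_dist, h.isom a b s hs u hu]
  simp [Real.dist_eq]

lemma param_eq (h : IsRTree geo) {base x y : T} {s u : ℝ}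
    (hs : s ∈ Icc (0:ℝ) (dist base x)) (hu : u ∈ Icc (0:ℝ) (dist base y))
    (he : geo base x s = geo base y u) : s = u := by
  have h1 := geo_dist_left h base x hs
  have h2 := geo_dist_left h base y hu
  rw [he] at h1
  linarith [h1, h2]

/-- clamped geodesic, globally continuous -/
noncomputable def gcl (geo : T → T → ℝ → T) (a b : T) (t : ℝ) : T :=
  geo a b (max 0 (min t (dist a b)))

lemma gcl_eq (a b : T) {t : ℝ} (ht : t ∈ Icc (0:ℝ) (dist a b)) :
    gcl geo a b t = geo a b t := by
  unfold gcl
  rw [min_eq_left ht.2, max_eq_right ht.1]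

lemma gcl_continuous (h : IsRTree geo) (a b : T) : Continuous (gcl geo a b) := by
  apply (geo_continuousOn h a b).comp_continuous
  · exact continuous_const.max (continuous_id.min continuous_const)
  · intro t
    constructor
    · exact le_max_left _ _
    · exact max_le (dist_nonneg) (min_le_right _ _)

end RTreeAux

namespace RTreeAux

variable {T : Type*} [MetricSpace T] {geo : T → T → ℝ → T}

lemma initial_segment (h : IsRTree geo) {base z : T} {s : ℝ}
    (hs : s ∈ Icc (0:ℝ) (dist base z)) (hpos : 0 < s) :
    geo base z '' Icc 0 s
      = geo base (geo base z s) '' Icc 0 (dist base (geo base z s)) := by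
  have hsub : Icc (0:ℝ) s ⊆ Icc 0 (dist base z) := Icc_subset_Icc le_rfl hs.2
  have hmaps : ∀ t ∈ Icc (0:ℝ) 1, s * t ∈ Icc (0:ℝ) s := by
    intro t ht
    constructor
    · exact mul_nonneg hpos.le ht.1
    · nlinarith [ht.2]
  have hcont : ContinuousOn (fun t => geo base z (s * t)) (Icc 0 1) := by
    apply (geo_continuousOn h base z).comp (continuous_const.mul continuous_id).continuousOn
    intro t ht
    exact hsub (hmaps t ht)
  have hinj : InjOn (fun t => geo base z (s * t)) (Icc 0 1) := by
    intro t1 h1 t2 h2 heq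
    have := h.isom base z (s * t1) (hsub (hmaps t1 h1)) (s * t2) (hsub (hmaps t2 h2))
    simp only at heq
    rw [heq, dist_self] at this
    have habs : |s * t1 - s * t2| = 0 := this.symm
    rw [abs_eq_zero] at habs
    have : s * (t1 - t2) = 0 := by linarith
    rcases mul_eq_zero.1 this with h' | h'
    · exact absurd h' hpos.ne'
    · linarith
  have hq0 : geo base z (s * 0) = base := by rw [mul_zero, h.source]
  have hq1 : geo base z (s * 1) = geo base z s := by rw [mul_one]
  have := h.unique_arc base (geo base z s) _ hcont hinj hq0 hq1
  rw [← this]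
  have himg : (fun t : ℝ => s * t) '' Icc 0 1 = Icc 0 s := by
    rw [Set.image_mul_left_Icc' hpos 0 1, mul_zero, mul_one]
  calc geo base z '' Icc 0 s = geo base z '' ((fun t : ℝ => s * t) '' Icc 0 1) := by rw [himg]
    _ = (fun t => geo base z (s * t)) '' Icc 0 1 := by rw [← Set.image_comp]; rfl

lemma agree_down (h : IsRTree geo) {base x y : T} {s : ℝ}
    (hsx : s ∈ Icc (0:ℝ) (dist base x)) (hsy : s ∈ Icc (0:ℝ) (dist base y))
    (he : geo base x s = geo base y s) {u : ℝ} (hu : u ∈ Icc (0:ℝ) s) :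
    geo base x u = geo base y u := by
  rcases eq_or_lt_of_le hsx.1 with h0 | hspos
  · have hu0 : u = 0 := le_antisymm (h0 ▸ hu.2) hu.1
    rw [hu0, h.source, h.source]
  · have h1 := initial_segment h hsx hspos
    have h2 := initial_segment h hsy hspos
    rw [he] at h1
    have himg : geo base x '' Icc 0 s = geo base y '' Icc 0 s := by rw [h1, ← h2]
    have hmem : geo base x u ∈ geo base y '' Icc 0 s := by
      rw [← himg]; exact ⟨u, hu, rfl⟩
    obtain ⟨v, hv, hveq⟩ := hmem
    have hux : u ∈ Icc (0:ℝ) (dist base x) := ⟨hu.1, hu.2.trans hsx.2⟩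
    have hvy : v ∈ Icc (0:ℝ) (dist base y) := ⟨hv.1, hv.2.trans hsy.2⟩
    have huv := param_eq h hux hvy hveq.symm
    rw [← huv] at hveq
    exact hveq.symm

end RTreeAux

namespace RTreeAux

variable {T : Type*} [MetricSpace T] {geo : T → T → ℝ → T}

lemma gromov_agree (h : IsRTree geo) (base x y : T) {t : ℝ} (ht0 : 0 ≤ t)
    (htK : t ≤ (dist base x + dist base y - dist x y) / 2) :
    geo base x t = geo base y t := by
  set dx := dist base x with hdx
  set dy := dist base y with hdy
  set A : Set ℝ := {s | s ∈ Icc 0 (min dx dy) ∧ geo base x s = geo base y s} with hA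
  have hAsubx : ∀ s ∈ A, s ∈ Icc (0:ℝ) dx := fun s hs =>
    ⟨hs.1.1, hs.1.2.trans (min_le_left _ _)⟩
  have hAsuby : ∀ s ∈ A, s ∈ Icc (0:ℝ) dy := fun s hs =>
    ⟨hs.1.1, hs.1.2.trans (min_le_right _ _)⟩
  have hAne : A.Nonempty :=
    ⟨0, ⟨le_rfl, le_min dist_nonneg dist_nonneg⟩, by rw [h.source, h.source]⟩
  have hAbdd : BddAbove A := ⟨min dx dy, fun s hs => hs.1.2⟩
  have hAclosed : IsClosed A := by
    have hAeq : A = Icc 0 (min dx dy) ∩ {s | gcl geo base x s = gcl geo base y s} := by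
      ext s
      simp only [hA, mem_inter_iff, mem_setOf_eq]
      constructor
      · rintro ⟨hs, he⟩
        exact ⟨hs, by rw [gcl_eq base x ⟨hs.1, hs.2.trans (min_le_left _ _)⟩,
          gcl_eq base y ⟨hs.1, hs.2.trans (min_le_right _ _)⟩]; exact he⟩
      · rintro ⟨hs, he⟩
        refine ⟨hs, ?_⟩
        rw [gcl_eq base x ⟨hs.1, hs.2.trans (min_le_left _ _)⟩,
          gcl_eq base y ⟨hs.1, hs.2.trans (min_le_right _ _)⟩] at he
        exact he
    rw [hAeq]
    exact isClosed_Icc.inter (isClosed_eq (gcl_continuous h base x) (gcl_continuous h base y))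
  set m := sSup A with hmdef
  have hm : m ∈ A := hAclosed.csSup_mem hAne hAbdd
  have hm0 : 0 ≤ m := hm.1.1
  have hmx : m ∈ Icc (0:ℝ) dx := hAsubx m hm
  have hmy : m ∈ Icc (0:ℝ) dy := hAsuby m hm
  -- key inequality
  have hkey : dx + dy - 2 * m ≤ dist x y := by
    rcases eq_or_lt_of_le hmx.2 with hex | hltx
    · have := dist_triangle base x y
      rw [← hdx] at this
      have h2 : dy ≤ dx + dist x y := by
        calc dy = dist base y := hdy
          _ ≤ dist base x + dist x y := dist_triangle base x y
          _ = dx + dist x y := by rw [← hdx]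
      linarith
    rcases eq_or_lt_of_le hmy.2 with hey | hlty
    · have h2 : dx ≤ dy + dist x y := by
        calc dx = dist base x := hdx
          _ ≤ dist base y + dist y x := dist_triangle base y x
          _ = dy + dist x y := by rw [← hdy, dist_comm]
      linarith
    -- nondegenerate case: build arc from x to y through p
    set p := geo base x m with hp
    have hpy : p = geo base y m := hm.2
    set q : ℝ → T := fun r => if r ≤ 1/2 then gcl geo base x (dx + 2*r*(m - dx))
      else gcl geo base y (m + (2*r - 1)*(dy - m)) with hqdef
    have hsx_mem : ∀ r : ℝ, 0 ≤ r → r ≤ 1/2 → dx + 2*r*(m - dx) ∈ Icc (0:ℝ) dx := by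
      intro r h0 h12
      constructor
      · nlinarith
      · nlinarith
    have hsy_mem : ∀ r : ℝ, ¬(r ≤ 1/2) → r ≤ 1 → m + (2*r - 1)*(dy - m) ∈ Icc (0:ℝ) dy := by
      intro r h12 h1
      push_neg at h12
      constructor
      · nlinarith
      · nlinarith
    have hsy_gt : ∀ r : ℝ, ¬(r ≤ 1/2) → m < m + (2*r - 1)*(dy - m) := by
      intro r h12
      push_neg at h12
      nlinarith
    have hqx : ∀ r : ℝ, 0 ≤ r → r ≤ 1/2 → q r = geo base x (dx + 2*r*(m - dx)) := by
      intro r h0 h12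
      rw [hqdef]
      simp only
      rw [if_pos h12, gcl_eq base x (hsx_mem r h0 h12)]
    have hqy : ∀ r : ℝ, ¬(r ≤ 1/2) → r ≤ 1 → q r = geo base y (m + (2*r - 1)*(dy - m)) := by
      intro r h12 h1
      rw [hqdef]
      simp only
      rw [if_neg h12, gcl_eq base y (hsy_mem r h12 h1)]
    have hcont : Continuous q := by
      apply Continuous.if_le
      · exact (gcl_continuous h base x).comp (by fun_prop)
      · exact (gcl_continuous h base y).comp (by fun_prop)
      · exact continuous_id
      · exact continuous_const
      · intro r hr
        rw [hr]
        have e1 : dx + 2*(1/2 : ℝ)*(m - dx) = m := by ring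
        have e2 : m + (2*(1/2 : ℝ) - 1)*(dy - m) = m := by ring
        rw [e1, e2, gcl_eq base x hmx, gcl_eq base y hmy]
        exact hm.2
    have hinj : InjOn q (Icc 0 1) := by
      intro r1 hr1 r2 hr2 heq
      by_cases c1 : r1 ≤ 1/2 <;> by_cases c2 : r2 ≤ 1/2
      · rw [hqx r1 hr1.1 c1, hqx r2 hr2.1 c2] at heq
        have hd := h.isom base x _ (hsx_mem r1 hr1.1 c1) _ (hsx_mem r2 hr2.1 c2)
        rw [heq, dist_self] at hd
        have := abs_eq_zero.1 hd.symm
        nlinarith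
      · -- r1 ≤ 1/2 < r2 : contradiction
        exfalso
        rw [hqx r1 hr1.1 c1, hqy r2 c2 hr2.2] at heq
        have hpe := param_eq h (hsx_mem r1 hr1.1 c1) (hsy_mem r2 c2 hr2.2) heq
        set u := m + (2*r2 - 1)*(dy - m) with hu
        rw [hpe] at heq
        have huA : u ∈ A := ⟨⟨(hsy_mem r2 c2 hr2.2).1,
          le_min (hpe ▸ (hsx_mem r1 hr1.1 c1).2) (hsy_mem r2 c2 hr2.2).2⟩, heq⟩
        have : u ≤ m := le_csSup hAbdd huA
        exact absurd this (not_le.2 (hsy_gt r2 c2))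
      · exfalso
        rw [hqx r2 hr2.1 c2, hqy r1 c1 hr1.2] at heq
        have hpe := param_eq h (hsx_mem r2 hr2.1 c2) (hsy_mem r1 c1 hr1.2) heq.symm
        set u := m + (2*r1 - 1)*(dy - m) with hu
        rw [hpe] at heq
        have huA : u ∈ A := ⟨⟨(hsy_mem r1 c1 hr1.2).1,
          le_min (hpe ▸ (hsx_mem r2 hr2.1 c2).2) (hsy_mem r1 c1 hr1.2).2⟩, heq.symm⟩
        have : u ≤ m := le_csSup hAbdd huA
        exact absurd this (not_le.2 (hsy_gt r1 c1))
      · rw [hqy r1 c1 hr1.2, hqy r2 c2 hr2.2] at heq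
        have hd := h.isom base y _ (hsy_mem r1 c1 hr1.2) _ (hsy_mem r2 c2 hr2.2)
        rw [heq, dist_self] at hd
        have := abs_eq_zero.1 hd.symm
        nlinarith
    have hq0 : q 0 = x := by
      rw [hqx 0 le_rfl (by norm_num)]
      have e : dx + 2*(0:ℝ)*(m - dx) = dx := by ring
      rw [e, hdx, h.target]
    have hq1 : q 1 = y := by
      rw [hqy 1 (by norm_num) le_rfl]
      have e : m + (2*(1:ℝ) - 1)*(dy - m) = dy := by ring
      rw [e, hdy, h.target]
    have harc := h.unique_arc x y q hcont.continuousOn hinj hq0 hq1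
    have hpmem : p ∈ q '' Icc 0 1 := by
      refine ⟨1/2, ⟨by norm_num, by norm_num⟩, ?_⟩
      rw [hqx (1/2) (by norm_num) le_rfl]
      have e : dx + 2*(1/2 : ℝ)*(m - dx) = m := by ring
      rw [e]
    rw [harc] at hpmem
    obtain ⟨w, hw, hwp⟩ := hpmem
    have h1 : dist x p = w := by rw [← hwp]; exact geo_dist_left h x y hw
    have h2 : dist p y = dist x y - w := by rw [← hwp]; exact geo_dist_right h x y hw
    have h3 : dist x p = dx - m := by
      rw [hp, dist_comm]
      exact geo_dist_right h base x hmx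
    have h4 : dist p y = dy - m := by
      rw [hpy]
      exact geo_dist_right h base y hmy
    linarith
  -- conclude
  have htm : t ≤ m := by linarith
  exact agree_down h hmx hmy hm.2 ⟨ht0, htm⟩

lemma gromov_ge (h : IsRTree geo) (base x y : T) {t : ℝ} (ht0 : 0 ≤ t)
    (htx : t ≤ dist base x) (hty : t ≤ dist base y)
    (he : geo base x t = geo base y t) :
    t ≤ (dist base x + dist base y - dist x y) / 2 := by
  have h1 : dist (geo base x t) x = dist base x - t := by
    have := geo_dist_right h base x ⟨ht0, htx⟩
    exact this
  have h2 : dist (geo base y t) y = dist base y - t := by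
    have := geo_dist_right h base y ⟨ht0, hty⟩
    exact this
  have h3 : dist x y ≤ dist x (geo base x t) + dist (geo base y t) y := by
    rw [← he]
    exact dist_triangle x (geo base x t) y
  rw [dist_comm] at h1
  linarith

end RTreeAux

namespace RTreeAux

open MeasureTheory

lemma sum_eq_pattern_nonneg {n : ℕ} {α : Type*} [DecidableEq α] (f : Fin n → α) (b : Fin n → ℝ) :
    0 ≤ ∑ i, ∑ j, b i * b j * (if f i = f j then 1 else 0) := by
  set S : α → ℝ := fun v => ∑ j ∈ Finset.univ.filter (fun j => f j = v), b j with hS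
  have inner : ∀ i, ∑ j, b i * b j * (if f i = f j then 1 else 0) = b i * S (f i) := by
    intro i
    rw [hS]
    simp only
    rw [Finset.mul_sum, Finset.sum_filter]
    apply Finset.sum_congr rfl
    intro j _
    by_cases hfe : f j = f i
    · rw [if_pos hfe, if_pos hfe.symm, mul_one]
    · rw [if_neg hfe, if_neg (fun hh => hfe hh.symm), mul_zero]
  rw [Finset.sum_congr rfl (fun i _ => inner i)]
  rw [← Finset.sum_fiberwise_of_maps_to
    (fun i _ => Finset.mem_image_of_mem f (Finset.mem_univ i)) (fun i => b i * S (f i))]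
  apply Finset.sum_nonneg
  intro v _
  have e1 : ∑ i ∈ Finset.univ.filter (fun i => f i = v), b i * S (f i)
      = ∑ i ∈ Finset.univ.filter (fun i => f i = v), b i * S v := by
    apply Finset.sum_congr rfl
    intro i hi
    rw [(Finset.mem_filter.1 hi).2]
  rw [e1, ← Finset.sum_mul]
  exact mul_self_nonneg _

end RTreeAux


/-- In a pointed ℝ-tree `(T, d, ∗)`, the Gromov product kernel
`K(x,y) = (d(x,∗) + d(y,∗) − d(x,y))/2` is positive semidefinite. -/
theorem rtree_gromov_product_posSemidef {T : Type*} [MetricSpace T]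
    (geo : T → T → ℝ → T) (h : IsRTree geo) (base : T)
    (n : ℕ) (x : Fin n → T) (c : Fin n → ℝ) :
    0 ≤ ∑ i, ∑ j, c i * c j *
      ((dist (x i) base + dist (x j) base - dist (x i) (x j)) / 2) := by
  classical
  open RTreeAux MeasureTheory in
  set d : Fin n → ℝ := fun i => dist base (x i) with hd
  set K : Fin n → Fin n → ℝ :=
    fun i j => (d i + d j - dist (x i) (x j)) / 2 with hK
  have hgoal : ∀ i j, (dist (x i) base + dist (x j) base - dist (x i) (x j)) / 2 = K i j := by
    intro i j
    rw [hK, hd]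
    simp only [dist_comm base]
  simp only [hgoal]
  have hK0 : ∀ i j, 0 ≤ K i j := by
    intro i j
    rw [hK, hd]
    simp only
    linarith [dist_triangle (x i) base (x j), dist_comm (x i) base]
  have hKlei : ∀ i j, K i j ≤ d i := by
    intro i j
    have := dist_triangle base (x i) (x j)
    rw [hK, hd]
    simp only
    linarith
  have hKlej : ∀ i j, K i j ≤ d j := by
    intro i j
    have h1 := dist_triangle base (x j) (x i)
    rw [dist_comm (x j) (x i)] at h1
    rw [hK, hd]
    simp only
    linarith
  set S : Fin n → Fin n → Set ℝ :=
    fun i j => Ico 0 (min (d i) (d j)) ∩ Iic (K i j) with hS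
  have hmeas : ∀ i j, MeasurableSet (S i j) := by
    intro i j
    exact measurableSet_Ico.inter measurableSet_Iic
  have hvol : ∀ i j, MeasureTheory.volume (S i j) = ENNReal.ofReal (K i j) := by
    intro i j
    apply le_antisymm
    · calc MeasureTheory.volume (S i j) ≤ MeasureTheory.volume (Icc 0 (K i j)) := by
            apply measure_mono
            rintro t ⟨ht1, ht2⟩
            exact ⟨ht1.1, ht2⟩
        _ = ENNReal.ofReal (K i j) := by rw [Real.volume_Icc, sub_zero]
    · calc ENNReal.ofReal (K i j) = MeasureTheory.volume (Ico 0 (K i j)) := by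
            rw [Real.volume_Ico, sub_zero]
        _ ≤ MeasureTheory.volume (S i j) := by
            apply measure_mono
            rintro t ⟨ht0, htK⟩
            exact ⟨⟨ht0, lt_of_lt_of_le htK (le_min (hKlei i j) (hKlej i j))⟩, le_of_lt htK⟩
  have hIntegrable : ∀ i j, Integrable ((S i j).indicator (fun _ => (1:ℝ))) := by
    intro i j
    rw [integrable_indicator_iff (hmeas i j)]
    refine integrableOn_const ?_ (by simp)
    rw [hvol i j]
    exact ENNReal.ofReal_ne_top
  have hKint : ∀ i j, K i j = ∫ t, (S i j).indicator (fun _ => (1:ℝ)) t := by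
    intro i j
    have := MeasureTheory.integral_indicator_one (μ := MeasureTheory.volume) (hmeas i j)
    rw [measureReal_def, hvol i j, ENNReal.toReal_ofReal (hK0 i j)] at this
    rw [← this]
    rfl
  calc (0:ℝ) ≤ ∫ t, ∑ i, ∑ j, c i * c j * (S i j).indicator (fun _ => (1:ℝ)) t := by
        apply MeasureTheory.integral_nonneg
        intro t
        simp only [Pi.zero_apply]
        show (0:ℝ) ≤ ∑ i, ∑ j, c i * c j * (S i j).indicator (fun _ => (1:ℝ)) t
        set b : Fin n → ℝ := fun i => if 0 ≤ t ∧ t < d i then c i else 0 with hb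
        set f : Fin n → T := fun i => geo base (x i) t with hf
        have hterm : ∀ i j, c i * c j * (S i j).indicator (fun _ => (1:ℝ)) t
            = b i * b j * (if f i = f j then 1 else 0) := by
          intro i j
          by_cases hSij : t ∈ S i j
          · have hS2 := hSij
            obtain ⟨⟨ht0, htmin⟩, htK⟩ := hS2
            have hti : t < d i := lt_of_lt_of_le htmin (min_le_left _ _)
            have htj : t < d j := lt_of_lt_of_le htmin (min_le_right _ _)
            have hfe : f i = f j := by
              rw [hf]
              exact gromov_agree h base (x i) (x j) ht0 htK
            rw [Set.indicator_of_mem hSij, hb]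
            simp only
            rw [if_pos ⟨ht0, hti⟩, if_pos ⟨ht0, htj⟩, if_pos hfe]
          · rw [Set.indicator_of_notMem hSij, mul_zero]
            by_cases hbi : 0 ≤ t ∧ t < d i
            · by_cases hbj : 0 ≤ t ∧ t < d j
              · by_cases hfe : f i = f j
                · exfalso
                  apply hSij
                  have := gromov_ge h base (x i) (x j) hbi.1 hbi.2.le hbj.2.le hfe
                  exact ⟨⟨hbi.1, lt_min hbi.2 hbj.2⟩, this⟩
                · rw [if_neg hfe, mul_zero]
              · rw [hb]; simp only; rw [if_neg hbj, mul_zero, zero_mul]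
            · rw [hb]; simp only; rw [if_neg hbi, zero_mul, zero_mul]
        rw [Finset.sum_congr rfl (fun i _ => Finset.sum_congr rfl (fun j _ => hterm i j))]
        exact sum_eq_pattern_nonneg f b
    _ = ∑ i, ∑ j, ∫ t, c i * c j * (S i j).indicator (fun _ => (1:ℝ)) t := by
        rw [MeasureTheory.integral_finset_sum]
        · apply Finset.sum_congr rfl
          intro i _
          rw [MeasureTheory.integral_finset_sum]
          intro j _
          exact ((hIntegrable i j).const_mul _)
        · intro i _
          apply MeasureTheory.integrable_finset_sum
          intro j _
          exact ((hIntegrable i j).const_mul _)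
    _ = ∑ i, ∑ j, c i * c j * K i j := by
        apply Finset.sum_congr rfl
        intro i _
        apply Finset.sum_congr rfl
        intro j _
        rw [MeasureTheory.integral_const_mul, ← hKint i j]
end

section
/- Let I be a countable index set and let {(t_i, π_i)}_{i∈I} be a family where each π_i : (−∞, t_i] → ℝ is a path, with the coalescing property: for every i,j there exists τ_{ij} ≤ min(t_i,t_j) such that π_i(r) = π_j(r) for all r ≤ τ_{ij} and π_i(r) ≠ π_j(r) for all r ∈ (τ_{ij}, min(t_i,t_j)]. Then d((t_i,π_i),(t_j,π_j)) := t_i + t_j − 2τ_{ij} (with d = 0 when i = j) defines a metric on the set of distinct pairs, i.e. it is symmetric, positive for distinct elements, and satisfies the triangle inequality. -/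
open Set

/-- The coalescence time of two backward paths `(t i, π i)` and `(t j, π j)`:
`τ_{ij} = sup {r ≤ min(t i, t j) : π i r = π j r}`. -/
noncomputable def coalTime {I : Type*} (t : I → ℝ) (π : I → ℝ → ℝ) (i j : I) : ℝ :=
  sSup {r : ℝ | r ≤ min (t i) (t j) ∧ π i r = π j r}

/-- The ancestral distance `d((t i, π i), (t j, π j)) = t i + t j − 2 τ_{ij}`. -/
noncomputable def ancestralDist {I : Type*} (t : I → ℝ) (π : I → ℝ → ℝ) (i j : I) : ℝ :=
  t i + t j - 2 * coalTime t π i j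

/-- For a countable family of coalescing backward paths `π i : (−∞, t i] → ℝ`, the
ancestral distance `t i + t j − 2 τ_{ij}` is a metric: it vanishes on the diagonal,
is symmetric, is positive on distinct elements, and satisfies the triangle
inequality. -/
theorem ancestral_distance_is_metric {I : Type*} [Countable I]
    (t : I → ℝ) (π : I → ℝ → ℝ)
    -- the coalescing property
    (hcoal : ∀ i j : I, ∃ τ₀ : ℝ, τ₀ ≤ min (t i) (t j) ∧
      (∀ r : ℝ, r ≤ τ₀ → π i r = π j r) ∧
      (∀ r : ℝ, τ₀ < r → r ≤ min (t i) (t j) → π i r ≠ π j r)) :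
    (∀ i : I, ancestralDist t π i i = 0) ∧
    (∀ i j : I, ancestralDist t π i j = ancestralDist t π j i) ∧
    (∀ i j : I, (t i ≠ t j ∨ ∃ r : ℝ, r ≤ min (t i) (t j) ∧ π i r ≠ π j r) →
      0 < ancestralDist t π i j) ∧
    (∀ i j k : I, ancestralDist t π i k ≤ ancestralDist t π i j + ancestralDist t π j k)
    := by
  -- From the coalescing property, `coalTime t π i j` equals the given `τ₀`.
  have key : ∀ i j : I, coalTime t π i j ≤ min (t i) (t j) ∧
      (∀ r : ℝ, r ≤ coalTime t π i j → π i r = π j r) ∧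
      (∀ r : ℝ, coalTime t π i j < r → r ≤ min (t i) (t j) → π i r ≠ π j r) := by
    intro i j
    obtain ⟨τ₀, hτ, h1, h2⟩ := hcoal i j
    have hset : {r : ℝ | r ≤ min (t i) (t j) ∧ π i r = π j r} = Set.Iic τ₀ := by
      ext r
      simp only [mem_setOf_eq, mem_Iic]
      constructor
      · rintro ⟨hr, heq⟩
        by_contra h
        push_neg at h
        exact h2 r h hr heq
      · intro hr
        exact ⟨hr.trans hτ, h1 r hr⟩
    have hct : coalTime t π i j = τ₀ := by
      rw [coalTime, hset, csSup_Iic]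
    rw [hct]
    exact ⟨hτ, h1, h2⟩
  have hsymm : ∀ i j : I, coalTime t π i j = coalTime t π j i := by
    intro i j
    unfold coalTime
    congr 1
    ext r
    simp only [mem_setOf_eq, min_comm (t i) (t j), eq_comm]
  refine ⟨?_, ?_, ?_, ?_⟩
  · intro i
    have h := (key i i).1
    have h2 := (key i i).2.2
    have : coalTime t π i i = t i := by
      rcases lt_or_eq_of_le (h.trans_eq (min_self _)) with hlt | he
      · exact absurd (h2 (t i) hlt (le_of_eq (min_self _).symm)) (by simp)
      · exact he
    simp [ancestralDist, this]; ring
  · intro i j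
    simp [ancestralDist, hsymm i j]; ring
  · intro i j hij
    obtain ⟨h, _, h2⟩ := key i j
    rcases hij with hne | ⟨r, hr, hne⟩
    · have : 2 * coalTime t π i j < t i + t j := by
        rcases le_total (t i) (t j) with hle | hle
        · have : min (t i) (t j) = t i := min_eq_left hle
          have : coalTime t π i j ≤ t i := by rw [← this]; exact h
          nlinarith [lt_of_le_of_ne hle hne]
        · have : min (t i) (t j) = t j := min_eq_right hle
          have : coalTime t π i j ≤ t j := by rw [← this]; exact h
          nlinarith [lt_of_le_of_ne hle (Ne.symm hne)]
      simp only [ancestralDist]; linarith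
    · have hlt : coalTime t π i j < r := by
        by_contra hc
        push_neg at hc
        exact hne ((key i j).2.1 r hc)
      have hmin : coalTime t π i j < min (t i) (t j) := hlt.trans_le hr
      have hti : coalTime t π i j < t i := hmin.trans_le (min_le_left _ _)
      have htj : coalTime t π i j < t j := hmin.trans_le (min_le_right _ _)
      simp only [ancestralDist]; linarith
  · intro i j k
    set a := coalTime t π i j
    set b := coalTime t π j k
    set c := coalTime t π i k
    -- ultrametric-type inequality : min a b ≤ c
    have hmin : min a b ≤ c := by
      by_contra hc
      push_neg at hc
      set m := min a b
      have hmi : m ≤ t i := le_trans (min_le_left a b) ((key i j).1.trans (min_le_left _ _))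
      have hmk : m ≤ t k := le_trans (min_le_right a b) ((key j k).1.trans (min_le_right _ _))
      have h1 : π i m = π j m := (key i j).2.1 m (min_le_left a b)
      have h2 : π j m = π k m := (key j k).2.1 m (min_le_right a b)
      exact (key i k).2.2 m hc (le_min hmi hmk) (h1.trans h2)
    have hmax : max a b ≤ t j :=
      max_le ((key i j).1.trans (min_le_right _ _)) ((key j k).1.trans (min_le_left _ _))
    have hsum : a + b ≤ t j + c := by
      have := min_add_max a b
      linarith
    simp only [ancestralDist]
    linarith
end
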